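/- arXiv:1503.08375 — 3 statements merged into one kernel-verified Lean document; each statement's English description precedes it below -/
import Mathlib

section
/- Let p be an odd prime and t ∈ F_p \ {0}. Let U be a 6-dimensional F_p-vector space and let S² ⊆ Λ²U be the annihilator of span{f₁, f₂, f₃} where f₁ = u₁*∧u₂* − u₄*∧u₅*, f₂ = u₂*∧u₃* − u₅*∧u₆* + u₁*∧u₄*, f₃ = u₃*∧u₆* − t·u₁*∧u₅* − u₂*∧u₄*, under the standard pairing Λ²U × Λ²U* → F_p. Then S² is spanned by its decomposable elements u∧u' (u, u' ∈ U). -/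
/-!
The three functionals `f₁, f₂, f₃` are dual to `u₁∧u₂, u₂∧u₃, u₃∧u₆`, so these three vectors
span a complement `W` of `S²` in `Λ²U`. Twelve explicit decomposable vectors lie in `S²`, and
together with `W` they span `Λ²U`: ten of the basis vectors `uᵢ∧uⱼ` occur among them, and the
remaining five are recovered by explicit linear combinations, two of which need `2` to be
invertible. By the modular law `S²` is then the span of those twelve decomposable vectors.
-/

open ExteriorAlgebra

/-- The standard pairing of a `d`-tuple of dual vectors against the exterior algebra:
on the degree-`d` component it is `w ↦ ⟨⟨w, f₁ ∧ ⋯ ∧ f_d⟩⟩ = det (fᵢ(uⱼ))`, and it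
vanishes on the other graded components. -/
noncomputable def pairDual (F U : Type*) [Field F] [AddCommGroup U] [Module F U]
    (d : ℕ) (f : Fin d → Module.Dual F U) : ExteriorAlgebra F U →ₗ[F] F :=
  ExteriorAlgebra.liftAlternating
    (Pi.single d (Matrix.detRowAlternating.compLinearMap (LinearMap.pi f)))

open Submodule

section ExteriorSquare

variable {R M I : Type*} [CommRing R] [AddCommGroup M] [Module R M]

theorem ExteriorAlgebra.ι_mul_ι_swap (x y : M) : ι R y * ι R x = -(ι R x * ι R y) :=
  eq_neg_of_add_eq_zero_left (ι_add_mul_swap y x)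

theorem ExteriorAlgebra.ι_mul_ι_swap_of_lt [LinearOrder I] (v : I → M) {i j : I} (_ : j < i) :
    ι R (v i) * ι R (v j) = -(ι R (v j) * ι R (v i)) :=
  ι_mul_ι_swap _ _

theorem ExteriorAlgebra.ι_mul_ι_mem_exteriorPower_two (x y : M) :
    ι R x * ι R y ∈ ⋀[R]^2 M := by
  rw [exteriorPower, pow_two]
  exact mul_mem_mul ⟨x, rfl⟩ ⟨y, rfl⟩

theorem ExteriorAlgebra.exteriorPower_two_le_of_ι_mul_ι_mem [LinearOrder I] {v : I → M}
    (hv : span R (Set.range v) = ⊤) {T : Submodule R (ExteriorAlgebra R M)}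
    (hT : ∀ i j, i < j → ι R (v i) * ι R (v j) ∈ T) : ⋀[R]^2 M ≤ T := by
  have hrange : LinearMap.range (ι R) = span R (ι R '' Set.range v) := by
    rw [LinearMap.range_eq_map, ← hv, map_span]
  rw [exteriorPower, pow_two, hrange, span_mul_span, span_le]
  rintro _ ⟨_, ⟨_, ⟨i, rfl⟩, rfl⟩, _, ⟨_, ⟨j, rfl⟩, rfl⟩, rfl⟩
  show ι R (v i) * ι R (v j) ∈ T
  rcases lt_trichotomy i j with h | rfl | h
  · exact hT i j h
  · simp
  · rw [ι_mul_ι_swap]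
    exact neg_mem (hT j i h)

end ExteriorSquare

theorem eq_zero_of_mem_span_of_biorthogonal {K M I : Type*} [CommSemiring K] [AddCommMonoid M]
    [Module K M] [Fintype I] [DecidableEq I] (φ : I → Module.Dual K M) (w : I → M)
    (hφw : ∀ i j, φ i (w j) = if i = j then 1 else 0) {x : M} (hx : x ∈ span K (Set.range w))
    (hφx : ∀ i, φ i x = 0) : x = 0 := by
  obtain ⟨c, rfl⟩ := (mem_span_range_iff_exists_fun K).1 hx
  have hc : ∀ i, c i = 0 := fun i => by simpa [hφw] using hφx i
  simp [hc]

theorem pairDual_ι_mul_ι {F U : Type*} [Field F] [AddCommGroup U] [Module F U]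
    (f g : Module.Dual F U) (a b : U) :
    pairDual F U 2 ![f, g] (ι F a * ι F b) = f a * g b - g a * f b := by
  have h : ι F a * ι F b = ιMulti F 2 ![a, b] := by
    simp [ιMulti_apply]
  rw [h, pairDual, liftAlternating_apply_ιMulti, Pi.single_eq_same,
    AlternatingMap.compLinearMap_apply]
  show Matrix.det (Matrix.of fun i j => (LinearMap.pi ![f, g]) (![a, b] i) j) = _
  rw [Matrix.det_fin_two]
  simp [LinearMap.pi_apply]

section SixDimensional

variable {F U : Type*} [Field F] [AddCommGroup U] [Module F U]

-- The paper's `f₁, f₂, f₃`, with `uₖ*` written `u.coord (k - 1)`.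
noncomputable def s2Functionals (u : Module.Basis (Fin 6) F U) (t : F) :
    Fin 3 → Module.Dual F (ExteriorAlgebra F U) :=
  ![pairDual F U 2 ![u.coord 0, u.coord 1] - pairDual F U 2 ![u.coord 3, u.coord 4],
    pairDual F U 2 ![u.coord 1, u.coord 2] - pairDual F U 2 ![u.coord 4, u.coord 5]
      + pairDual F U 2 ![u.coord 0, u.coord 3],
    pairDual F U 2 ![u.coord 2, u.coord 5] - t • pairDual F U 2 ![u.coord 0, u.coord 4]
      - pairDual F U 2 ![u.coord 1, u.coord 3]]

noncomputable def s2 (u : Module.Basis (Fin 6) F U) (t : F) : Submodule F (ExteriorAlgebra F U) :=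
  ⋀[F]^2 U ⊓ LinearMap.ker (s2Functionals u t 0) ⊓ LinearMap.ker (s2Functionals u t 1)
    ⊓ LinearMap.ker (s2Functionals u t 2)

noncomputable def s2GenPairs (u : Module.Basis (Fin 6) F U) (t : F) : Set (U × U) :=
  {(u 0 + u 4, u 1 - u 3 - u 5), (u 1 + u 4, u 2 + u 5), (u 1 + u 3, u 0 + u 2 - u 4),
    (u 1 + u 2, u 3 + u 5), (u 0 + u 2, u 4 + t • u 5), (u 0, u 2), (u 0, u 5), (u 1, u 4),
    (u 1, u 5), (u 2, u 3), (u 2, u 4), (u 3, u 5)}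

noncomputable def s2Gens (u : Module.Basis (Fin 6) F U) (t : F) : Set (ExteriorAlgebra F U) :=
  (fun p : U × U => ι F p.1 * ι F p.2) '' s2GenPairs u t

noncomputable def s2Complement (u : Module.Basis (Fin 6) F U) : Fin 3 → ExteriorAlgebra F U :=
  ![ι F (u 0) * ι F (u 1), ι F (u 1) * ι F (u 2), ι F (u 2) * ι F (u 5)]

theorem s2Gens_subset_s2 (u : Module.Basis (Fin 6) F U) (t : F) : s2Gens u t ⊆ s2 u t := by
  rintro _ ⟨⟨a, b⟩, hab, rfl⟩
  simp only [s2GenPairs, Set.mem_insert_iff, Set.mem_singleton_iff, Prod.mk.injEq] at hab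
  refine ⟨⟨⟨ι_mul_ι_mem_exteriorPower_two a b, ?_⟩, ?_⟩, ?_⟩ <;>
  rcases hab with ⟨rfl, rfl⟩ | ⟨rfl, rfl⟩ | ⟨rfl, rfl⟩ | ⟨rfl, rfl⟩ | ⟨rfl, rfl⟩ | ⟨rfl, rfl⟩ |
    ⟨rfl, rfl⟩ | ⟨rfl, rfl⟩ | ⟨rfl, rfl⟩ | ⟨rfl, rfl⟩ | ⟨rfl, rfl⟩ | ⟨rfl, rfl⟩ <;>
  simp only [SetLike.mem_coe, LinearMap.mem_ker, s2Functionals, Matrix.cons_val,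
    LinearMap.sub_apply, LinearMap.add_apply, LinearMap.smul_apply, pairDual_ι_mul_ι] <;>
  simp

theorem s2_inf_span_s2Complement (u : Module.Basis (Fin 6) F U) (t : F) :
    s2 u t ⊓ span F (Set.range (s2Complement u)) = ⊥ := by
  refine eq_bot_iff.2 fun x ⟨⟨⟨⟨_, h₁⟩, h₂⟩, h₃⟩, hx⟩ => (mem_bot F).2 <|
    eq_zero_of_mem_span_of_biorthogonal (s2Functionals u t) _ ?_ hx ?_
  · intro i j
    fin_cases i <;> fin_cases j <;> simp [s2Functionals, s2Complement, pairDual_ι_mul_ι]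
  · intro i
    fin_cases i
    exacts [h₁, h₂, h₃]

theorem exteriorPower_two_le_span_s2Gens_sup (h2 : (2 : F) ≠ 0)
    (u : Module.Basis (Fin 6) F U) (t : F) :
    ⋀[F]^2 U ≤ span F (s2Gens u t) ⊔ span F (Set.range (s2Complement u)) := by
  rw [← span_union]
  set T := span F (s2Gens u t ∪ Set.range (s2Complement u))
  have gen : ∀ a b, (a, b) ∈ s2GenPairs u t → ι F a * ι F b ∈ T :=
    fun a b hab => subset_span (Or.inl ⟨(a, b), hab, rfl⟩)
  obtain ⟨e45, e13, e04, e34, e03⟩ :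
      ι F (u 4) * ι F (u 5) = ι F (u 1 + u 4) * ι F (u 2 + u 5) - ι F (u 1) * ι F (u 2)
        - ι F (u 1) * ι F (u 5) + ι F (u 2) * ι F (u 4) ∧
      ι F (u 1) * ι F (u 3) = ι F (u 1 + u 2) * ι F (u 3 + u 5) - ι F (u 1) * ι F (u 5)
        - ι F (u 2) * ι F (u 3) - ι F (u 2) * ι F (u 5) ∧
      ι F (u 0) * ι F (u 4) = ι F (u 0 + u 2) * ι F (u 4 + t • u 5) - t • (ι F (u 0) * ι F (u 5))
        - ι F (u 2) * ι F (u 4) - t • (ι F (u 2) * ι F (u 5)) ∧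
      ι F (u 3) * ι F (u 4) = (2 : F)⁻¹ • (ι F (u 0 + u 4) * ι F (u 1 - u 3 - u 5)
        - ι F (u 1 + u 3) * ι F (u 0 + u 2 - u 4) - (2 : F) • (ι F (u 0) * ι F (u 1))
        + ι F (u 0) * ι F (u 5) + ι F (u 1) * ι F (u 2) - ι F (u 2) * ι F (u 3)
        + ι F (u 4) * ι F (u 5)) ∧
      ι F (u 0) * ι F (u 3) = (2 : F)⁻¹ • (-(ι F (u 0 + u 4) * ι F (u 1 - u 3 - u 5)
        + ι F (u 1 + u 3) * ι F (u 0 + u 2 - u 4)) - ι F (u 0) * ι F (u 5)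
        - (2 : F) • (ι F (u 1) * ι F (u 4)) + ι F (u 1) * ι F (u 2) - ι F (u 2) * ι F (u 3)
        - ι F (u 4) * ι F (u 5)) := by
    refine ⟨?_, ?_, ?_, (eq_inv_smul_iff₀ h2).2 ?_, (eq_inv_smul_iff₀ h2).2 ?_⟩ <;>
    · simp (disch := decide) only [map_add, map_sub, map_smul, add_mul, mul_add, mul_sub,
        mul_smul_comm, ι_mul_ι_swap_of_lt u]
      module
  refine exteriorPower_two_le_of_ι_mul_ι_mem u.span_eq fun i j hij => ?_
  fin_cases i <;> fin_cases j <;>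
    simp only [Fin.reduceFinMk, Fin.reduceLT, e45, e13, e04, e34, e03] at hij ⊢ <;>
    repeat' first | apply add_mem | apply sub_mem | apply neg_mem | apply smul_mem
  all_goals first
    | (apply gen; simp only [s2GenPairs, Set.mem_insert_iff, Set.mem_singleton_iff, true_or,
        or_true]; done)
    | (apply subset_span; right; simp only [s2Complement, Matrix.range_cons, Matrix.range_empty,
        Set.union_empty, Set.mem_union, Set.mem_singleton_iff, true_or, or_true])

theorem span_decomposable_inf_s2 (h2 : (2 : F) ≠ 0) (u : Module.Basis (Fin 6) F U) (t : F) :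
    span F {x | x ∈ s2 u t ∧ ∃ a b : U, x = ι F a * ι F b} = s2 u t := by
  have hgens : s2Gens u t ⊆ {x | x ∈ s2 u t ∧ ∃ a b : U, x = ι F a * ι F b} :=
    fun x hx => ⟨s2Gens_subset_s2 u t hx, by obtain ⟨⟨a, b⟩, -, rfl⟩ := hx; exact ⟨a, b, rfl⟩⟩
  refine eq_of_le_of_inf_le_of_le_sup (span_le.2 fun x hx => hx.1)
    (s2_inf_span_s2Complement u t ▸ bot_le) ?_
  calc s2 u t ≤ ⋀[F]^2 U := fun x hx => hx.1.1.1
    _ ≤ span F (s2Gens u t) ⊔ span F (Set.range (s2Complement u)) :=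
      exteriorPower_two_le_span_s2Gens_sup h2 u t
    _ ≤ _ := sup_le_sup_right (span_mono hgens) _

end SixDimensional

theorem stmt_10_general (p : ℕ) [Fact p.Prime] (hp2 : p ≠ 2) (t : ZMod p)
    (U : Type*) [AddCommGroup U] [Module (ZMod p) U] (u : Module.Basis (Fin 6) (ZMod p) U) :
    let F := ZMod p
    let φ₁ := pairDual F U 2 ![u.coord 0, u.coord 1] - pairDual F U 2 ![u.coord 3, u.coord 4]
    let φ₂ := pairDual F U 2 ![u.coord 1, u.coord 2] - pairDual F U 2 ![u.coord 4, u.coord 5]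
      + pairDual F U 2 ![u.coord 0, u.coord 3]
    let φ₃ := pairDual F U 2 ![u.coord 2, u.coord 5] - t • pairDual F U 2 ![u.coord 0, u.coord 4]
      - pairDual F U 2 ![u.coord 1, u.coord 3]
    let S₂ : Submodule F (ExteriorAlgebra F U) :=
      ⋀[F]^2 U ⊓ LinearMap.ker φ₁ ⊓ LinearMap.ker φ₂ ⊓ LinearMap.ker φ₃
    Submodule.span F {x | x ∈ S₂ ∧ ∃ a b : U, x = ι F a * ι F b} = S₂ := by
  intro F φ₁ φ₂ φ₃ S₂
  exact span_decomposable_inf_s2 (Ring.two_ne_zero (by rwa [ZMod.ringChar_zmod_n])) u t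

/-- Let `p` be odd, `t ∈ F_p` nonzero, `U` a 6-dimensional `F_p`-vector space, and
`S² ⊆ Λ²U` the annihilator of `span{f₁, f₂, f₃}` where `f₁ = u₁*∧u₂* − u₄*∧u₅*`,
`f₂ = u₂*∧u₃* − u₅*∧u₆* + u₁*∧u₄*`, `f₃ = u₃*∧u₆* − t·u₁*∧u₅* − u₂*∧u₄*`.
Then `S²` is spanned by its decomposable elements `u∧u'`. -/
theorem stmt_10 (p : ℕ) [Fact p.Prime] (hp2 : p ≠ 2) (t : ZMod p) (ht : t ≠ 0)
    (U : Type*) [AddCommGroup U] [Module (ZMod p) U] (u : Module.Basis (Fin 6) (ZMod p) U) :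
    let F := ZMod p
    let φ₁ := pairDual F U 2 ![u.coord 0, u.coord 1] - pairDual F U 2 ![u.coord 3, u.coord 4]
    let φ₂ := pairDual F U 2 ![u.coord 1, u.coord 2] - pairDual F U 2 ![u.coord 4, u.coord 5]
      + pairDual F U 2 ![u.coord 0, u.coord 3]
    let φ₃ := pairDual F U 2 ![u.coord 2, u.coord 5] - t • pairDual F U 2 ![u.coord 0, u.coord 4]
      - pairDual F U 2 ![u.coord 1, u.coord 3]
    let S₂ : Submodule F (ExteriorAlgebra F U) :=
      ⋀[F]^2 U ⊓ LinearMap.ker φ₁ ⊓ LinearMap.ker φ₂ ⊓ LinearMap.ker φ₃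
    Submodule.span F {x | x ∈ S₂ ∧ ∃ a b : U, x = ι F a * ι F b} = S₂ :=
  stmt_10_general p hp2 t U u
end

section
/- Let p be an odd prime. Let U be a 6-dimensional F_p-vector space with basis u₁,...,u₆, set f₁ = u₁*∧u₂* − u₄*∧u₅*, f₂ = u₂*∧u₃* − u₅*∧u₆* + u₁*∧u₄*, f₃ = u₃*∧u₆* − u₂*∧u₄* in Λ²U*, and K³ = span{fᵢ∧uⱼ*} ⊆ Λ³U*. Then S³ = (K³)^⊥ ⊆ Λ³U equals span{w₁, w₂} where w₁ = u₁∧u₂∧u₃ + u₁∧u₅∧u₆ + u₃∧u₄∧u₅ and w₂ = u₁∧u₃∧u₅, and the span of elements of S³ of the form u'∧u (u' ∈ Λ²U, u ∈ U) equals span{w₂}. -/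
open ExteriorAlgebra

/-!
The pairings `x_abc = ⟨x, uₐ* ∧ u_b* ∧ u_c*⟩`, `a < b < c` (indices counted from `0`), are the
coordinates of `x ∈ Λ³U` in the basis `uₐ ∧ u_b ∧ u_c`. Each `fᵢ ∧ uⱼ*` is a signed sum of such
coordinate forms, so `S³` is cut out by eighteen linear equations in the twenty coordinates. Their
solutions have `x₀₁₂ = x₀₄₅ = x₂₃₄` and `x₀₂₄` free and all other coordinates zero: `span {w₁, w₂}`.

If moreover `x = αw₁ + βw₂` equals `u' ∧ v`, then `x ∧ v = 0`. Pairing `x ∧ v` with 4-forms and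
expanding along `v` gives linear equations in the coordinates of `v` that force `v = 0` once
`α ≠ 0`.
-/

section PairDual

variable {F U : Type*} [Field F] [AddCommGroup U] [Module F U] {d : ℕ}

theorem pairDual_ιMulti (f : Fin d → Module.Dual F U) (v : Fin d → U) :
    pairDual F U d f (ιMulti F d v) = (Matrix.of fun i j => f j (v i)).det := by
  rw [pairDual, liftAlternating_apply_ιMulti, Pi.single_eq_same,
    Matrix.detRowAlternating.compLinearMap_apply]
  rfl

theorem pairDual_eq_smul_of_det (f g : Fin d → Module.Dual F U) (c : F)
    (h : ∀ v : Fin d → U,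
      (Matrix.of fun i j => f j (v i)).det = c * (Matrix.of fun i j => g j (v i)).det) :
    pairDual F U d f = c • pairDual F U d g := by
  have : Matrix.detRowAlternating.compLinearMap (LinearMap.pi f)
      = c • Matrix.detRowAlternating.compLinearMap (LinearMap.pi g) := by
    ext v
    exact h v
  rw [pairDual, pairDual, this, Pi.single_smul, map_smul]

theorem pairDual_comp_perm (f : Fin d → Module.Dual F U) (σ : Equiv.Perm (Fin d)) :
    pairDual F U d (f ∘ σ) = Equiv.Perm.sign σ • pairDual F U d f := by
  rw [Units.smul_def, ← Int.cast_smul_eq_zsmul F]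
  exact pairDual_eq_smul_of_det _ _ _ fun v =>
    Matrix.det_permute' σ (Matrix.of fun i j => f j (v i))

theorem pairDual_eq_zero_of_eq (f : Fin d → Module.Dual F U) {i j : Fin d} (hij : i ≠ j)
    (h : f i = f j) : pairDual F U d f = 0 := by
  simpa using pairDual_eq_smul_of_det f f 0 fun v => by
    rw [zero_mul]
    exact Matrix.det_zero_of_column_eq hij fun k => by simp [h]

theorem pairDual_comp_subtype (f : Fin d → Module.Dual F U) :
    (pairDual F U d f).comp (⋀[F]^d U).subtype =
      exteriorPower.pairingDual F U d (exteriorPower.ιMulti F d f) := by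
  ext v
  simp [pairDual_ιMulti, exteriorPower.pairingDual_ιMulti_ιMulti]

theorem eq_zero_of_pairDual_coord_eq_zero {ι : Type*} [LinearOrder ι] (u : Module.Basis ι F U)
    {y : ExteriorAlgebra F U} (hy : y ∈ ⋀[F]^d U)
    (h : ∀ s : Fin d → ι, StrictMono s → pairDual F U d (u.coord ∘ s) y = 0) : y = 0 := by
  suffices (⟨y, hy⟩ : ⋀[F]^d U) = 0 by simpa using congrArg Subtype.val this
  refine (u.exteriorPower d).ext_elem fun S => ?_
  rw [exteriorPower.basis_repr_apply, exteriorPower.ιMultiDual, exteriorPower.ιMulti_family,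
    ← pairDual_comp_subtype, map_zero, Finsupp.zero_apply]
  exact h _ (Set.powersetCard.ofFinEmbEquiv.symm S).strictMono

theorem ιMulti_snoc (w : Fin d → U) (v : U) :
    ιMulti F (d + 1) (Fin.snoc w v) = ιMulti F d w * ι F v := by
  have h1 : ιMulti F 1 ![v] = ι F v := by
    rw [ιMulti_succ_apply, ιMulti_zero_apply, mul_one]
    rfl
  rw [← h1, ιMulti_mul_ιMulti, Fin.append_right_eq_snoc]
  rfl

theorem pairDual_mul_ι (f : Fin (d + 1) → Module.Dual F U) {y : ExteriorAlgebra F U}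
    (hy : y ∈ ⋀[F]^d U) (v : U) :
    pairDual F U (d + 1) f (y * ι F v) =
      ∑ j : Fin (d + 1), (-1) ^ (d + j : ℕ) * f j v * pairDual F U d (f ∘ j.succAbove) y := by
  rw [← ιMulti_span_fixedDegree] at hy
  induction hy using Submodule.span_induction with
  | mem _ hw =>
    obtain ⟨w, rfl⟩ := hw
    rw [← ιMulti_snoc, pairDual_ιMulti, Matrix.det_succ_row _ (Fin.last d)]
    simp [pairDual_ιMulti, Matrix.submatrix, Fin.succAbove_last]
  | zero => simp
  | add y z _ _ hy hz => simp [add_mul, hy, hz, Finset.sum_add_distrib, mul_add]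
  | smul c y _ hy =>
    simp only [smul_mul_assoc, map_smul, hy, smul_eq_mul, Finset.mul_sum]
    exact Finset.sum_congr rfl fun j _ => by ring

theorem pairDual_four_mul_ι (f₀ f₁ f₂ f₃ : Module.Dual F U) {y : ExteriorAlgebra F U}
    (hy : y ∈ ⋀[F]^3 U) (v : U) :
    pairDual F U 4 ![f₀, f₁, f₂, f₃] (y * ι F v) =
      f₃ v * pairDual F U 3 ![f₀, f₁, f₂] y - f₂ v * pairDual F U 3 ![f₀, f₁, f₃] y
        + f₁ v * pairDual F U 3 ![f₀, f₂, f₃] y - f₀ v * pairDual F U 3 ![f₁, f₂, f₃] y := by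
  have minor : ∀ j : Fin 4, ![f₀, f₁, f₂, f₃] ∘ j.succAbove =
      ![![f₁, f₂, f₃], ![f₀, f₂, f₃], ![f₀, f₁, f₃], ![f₀, f₁, f₂]] j := by
    intro j
    funext i
    fin_cases j <;> fin_cases i <;> rfl
  rw [pairDual_mul_ι _ hy, Fin.sum_univ_four]
  simp only [minor]
  simp
  ring

theorem ιMulti_three (p q r : U) : ιMulti F 3 ![p, q, r] = ι F p * ι F q * ι F r := by
  simp [ιMulti_apply, mul_assoc]

theorem ι_mul_ι_mul_ι_mem (p q r : U) : ι F p * ι F q * ι F r ∈ ⋀[F]^3 U :=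
  ιMulti_three (F := F) p q r ▸ ιMulti_range F 3 (Set.mem_range_self _)

theorem pairDual_three_ι_mul (f g h : Module.Dual F U) (p q r : U) :
    pairDual F U 3 ![f, g, h] (ι F p * ι F q * ι F r) =
      Matrix.det !![f p, g p, h p; f q, g q, h q; f r, g r, h r] := by
  rw [← ιMulti_three, pairDual_ιMulti]
  congr 1
  ext i j
  fin_cases i <;> fin_cases j <;> rfl

end PairDual

section Coord3

variable {F U ι : Type*} [Field F] [AddCommGroup U] [Module F U] (u : Module.Basis ι F U)

noncomputable def coord3 (a b c : ι) : ExteriorAlgebra F U →ₗ[F] F :=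
  pairDual F U 3 ![u.coord a, u.coord b, u.coord c]

theorem coord3_swap₀₁ (a b c : ι) : coord3 u a b c = -coord3 u b a c := by
  have : ![u.coord a, u.coord b, u.coord c] =
      ![u.coord b, u.coord a, u.coord c] ∘ Equiv.swap 0 1 := by
    funext i
    fin_cases i <;> rfl
  rw [coord3, this, pairDual_comp_perm, Equiv.Perm.sign_swap (by decide), Units.neg_smul,
    one_smul, coord3]

theorem coord3_swap₁₂ (a b c : ι) : coord3 u a b c = -coord3 u a c b := by
  have : ![u.coord a, u.coord b, u.coord c] =
      ![u.coord a, u.coord c, u.coord b] ∘ Equiv.swap 1 2 := by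
    funext i
    fin_cases i <;> rfl
  rw [coord3, this, pairDual_comp_perm, Equiv.Perm.sign_swap (by decide), Units.neg_smul,
    one_smul, coord3]

theorem coord3_self₀₁ (a c : ι) : coord3 u a a c = 0 :=
  pairDual_eq_zero_of_eq _ (i := 0) (j := 1) (by decide) rfl

theorem coord3_self₁₂ (a b : ι) : coord3 u a b b = 0 :=
  pairDual_eq_zero_of_eq _ (i := 1) (j := 2) (by decide) rfl

theorem eq_zero_of_coord3_eq_zero [LinearOrder ι] {y : ExteriorAlgebra F U} (hy : y ∈ ⋀[F]^3 U)
    (h : ∀ a b c, a < b → b < c → coord3 u a b c y = 0) : y = 0 := by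
  refine eq_zero_of_pairDual_coord_eq_zero u hy fun s hs => ?_
  have : u.coord ∘ s = ![u.coord (s 0), u.coord (s 1), u.coord (s 2)] := by
    funext i
    fin_cases i <;> rfl
  rw [this]
  exact h _ _ _ (hs (by decide)) (hs (by decide))

end Coord3

section SixDim

variable {F U : Type*} [Field F] [AddCommGroup U] [Module F U] (u : Module.Basis (Fin 6) F U)

-- the pairing with `f_{i+1} ∧ u_{j+1}*`
noncomputable def fWedge (i : Fin 3) (j : Fin 6) : ExteriorAlgebra F U →ₗ[F] F :=
  ![coord3 u 0 1 j - coord3 u 3 4 j,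
    coord3 u 1 2 j - coord3 u 4 5 j + coord3 u 0 3 j,
    coord3 u 2 5 j - coord3 u 1 3 j] i

noncomputable def S3 : Submodule F (ExteriorAlgebra F U) :=
  ⋀[F]^3 U ⊓ ⨅ i : Fin 3, ⨅ j : Fin 6, LinearMap.ker (fWedge u i j)

noncomputable def w₁ : ExteriorAlgebra F U :=
  ι F (u 0) * ι F (u 1) * ι F (u 2) + ι F (u 0) * ι F (u 4) * ι F (u 5)
    + ι F (u 2) * ι F (u 3) * ι F (u 4)

noncomputable def w₂ : ExteriorAlgebra F U := ι F (u 0) * ι F (u 2) * ι F (u 4)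

theorem mem_S3_iff {x : ExteriorAlgebra F U} :
    x ∈ S3 u ↔ x ∈ ⋀[F]^3 U ∧ ∀ i j, fWedge u i j x = 0 := by
  simp [S3, Submodule.mem_iInf]

theorem w₁_mem : w₁ u ∈ ⋀[F]^3 U :=
  add_mem (add_mem (ι_mul_ι_mul_ι_mem _ _ _) (ι_mul_ι_mul_ι_mem _ _ _)) (ι_mul_ι_mul_ι_mem _ _ _)

theorem w₂_mem : w₂ u ∈ ⋀[F]^3 U := ι_mul_ι_mul_ι_mem _ _ _

theorem coord3_w₁ {a b c : Fin 6} (hab : a < b) (hbc : b < c) :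
    coord3 u a b c (w₁ u) =
      if (a, b, c) = (0, 1, 2) ∨ (a, b, c) = (0, 4, 5) ∨ (a, b, c) = (2, 3, 4) then 1 else 0 := by
  fin_cases a <;> fin_cases b <;> fin_cases c <;> simp at hab hbc ⊢ <;>
    simp [coord3, w₁, pairDual_three_ι_mul, Matrix.det_fin_three]

theorem coord3_w₂ {a b c : Fin 6} (hab : a < b) (hbc : b < c) :
    coord3 u a b c (w₂ u) = if (a, b, c) = (0, 2, 4) then 1 else 0 := by
  fin_cases a <;> fin_cases b <;> fin_cases c <;> simp at hab hbc ⊢ <;>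
    simp [coord3, w₂, pairDual_three_ι_mul, Matrix.det_fin_three]

theorem w₁_mem_S3 : w₁ u ∈ S3 u := by
  refine (mem_S3_iff u).2 ⟨w₁_mem u, ?_⟩
  simp [Fin.forall_fin_succ, fWedge, coord3, w₁, pairDual_three_ι_mul, Matrix.det_fin_three]

theorem w₂_mem_S3 : w₂ u ∈ S3 u := by
  refine (mem_S3_iff u).2 ⟨w₂_mem u, ?_⟩
  simp [Fin.forall_fin_succ, fWedge, coord3, w₂, pairDual_three_ι_mul, Matrix.det_fin_three]

theorem eq_smul_w₁_add_smul_w₂_of_mem_S3 {x : ExteriorAlgebra F U} (hx : x ∈ S3 u) :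
    x = coord3 u 0 1 2 x • w₁ u + coord3 u 0 2 4 x • w₂ u := by
  obtain ⟨hx3, hf⟩ := (mem_S3_iff u).1 hx
  -- the order hypotheses only orient `simp`, which then sorts the indices of every `coord3`
  have sort₀₁ : ∀ {a b : Fin 6} (c : Fin 6), b < a → coord3 u a b c = -coord3 u b a c :=
    fun c _ => coord3_swap₀₁ u _ _ c
  have sort₁₂ : ∀ (a : Fin 6) {b c : Fin 6}, c < b → coord3 u a b c = -coord3 u a c b :=
    fun a _ _ _ => coord3_swap₁₂ u a _ _
  simp [Fin.forall_fin_succ, fWedge, sort₀₁, sort₁₂, coord3_self₀₁, coord3_self₁₂] at hf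
  obtain ⟨⟨h034, h134, e0_2, h013, h014, e0_5⟩, ⟨e1_0, e1_1, e1_2, e1_3, e1_4, e1_5⟩,
    e2_0, h125, h123, h235, e2_4, h135⟩ := hf
  have h045 : coord3 u 0 4 5 x = coord3 u 0 1 2 x := by linear_combination -e1_0
  have h234 : coord3 u 2 3 4 x = coord3 u 0 1 2 x := by linear_combination -e0_2
  have h145 : coord3 u 1 4 5 x = 0 := by linear_combination -e1_1 - h013
  have h345 : coord3 u 3 4 5 x = 0 := by linear_combination h123 - e1_3
  have h015 : coord3 u 0 1 5 x = 0 := by linear_combination e0_5 + h345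
  have h124 : coord3 u 1 2 4 x = 0 := by linear_combination e1_4 - h034
  have h035 : coord3 u 0 3 5 x = 0 := by linear_combination e1_5 - h125
  have h025 : coord3 u 0 2 5 x = 0 := by linear_combination e2_0 + h013
  have h245 : coord3 u 2 4 5 x = 0 := by linear_combination -e2_4 - h134
  have h023 : coord3 u 0 2 3 x = 0 := by linear_combination -e1_2 - h245
  rw [← sub_eq_zero, ← sub_sub]
  refine eq_zero_of_coord3_eq_zero u
    (sub_mem (sub_mem hx3 (Submodule.smul_mem _ _ (w₁_mem u))) (Submodule.smul_mem _ _ (w₂_mem u)))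
    fun a b c hab hbc => ?_
  simp only [map_sub, map_smul, coord3_w₁ u hab hbc, coord3_w₂ u hab hbc]
  fin_cases a <;> fin_cases b <;> fin_cases c <;> simp at hab hbc ⊢ <;>
    simp [h013, h014, h015, h023, h025, h034, h035, h045, h123, h124, h125, h134, h135, h145,
      h234, h235, h245, h345]

theorem eq_zero_of_smul_w₁_add_smul_w₂_mul_ι_eq_zero {α β : F} (hα : α ≠ 0) {v : U}
    (h : (α • w₁ u + β • w₂ u) * ι F v = 0) : v = 0 := by
  have hy : α • w₁ u + β • w₂ u ∈ ⋀[F]^3 U :=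
    add_mem (Submodule.smul_mem _ _ (w₁_mem u)) (Submodule.smul_mem _ _ (w₂_mem u))
  have eqn : ∀ p q r s : Fin 6, pairDual F U 4 ![u.coord p, u.coord q, u.coord r, u.coord s]
      ((α • w₁ u + β • w₂ u) * ι F v) = 0 := fun p q r s => by rw [h, map_zero]
  have e0123 := eqn 0 1 2 3
  have e0145 := eqn 0 1 4 5
  have e0125 := eqn 0 1 2 5
  have e0124 := eqn 0 1 2 4
  have e0245 := eqn 0 2 4 5
  have e0234 := eqn 0 2 3 4
  simp only [pairDual_four_mul_ι _ _ _ _ hy, ← coord3.eq_1, map_add, map_smul, smul_eq_mul]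
    at e0123 e0145 e0125 e0124 e0245 e0234
  simp [coord3_w₁, coord3_w₂, hα] at e0123 e0145 e0125 e0124 e0245 e0234
  simp [e0145, hα] at e0124
  simp [e0125, hα] at e0245
  simp [e0123, hα] at e0234
  rw [← u.forall_coord_eq_zero_iff]
  intro i
  fin_cases i <;> assumption

theorem S3_eq_span : S3 u = Submodule.span F {w₁ u, w₂ u} := by
  refine le_antisymm (fun x hx => ?_) (Submodule.span_le.2 ?_)
  · rw [eq_smul_w₁_add_smul_w₂_of_mem_S3 u hx]
    exact Submodule.mem_span_pair.2 ⟨_, _, rfl⟩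
  · rintro y (rfl | rfl)
    exacts [w₁_mem_S3 u, w₂_mem_S3 u]

theorem ι_mul_ι_mem (p q : U) : ι F p * ι F q ∈ ⋀[F]^2 U := by
  rw [exteriorPower, pow_two]
  exact Submodule.mul_mem_mul (LinearMap.mem_range_self _ _) (LinearMap.mem_range_self _ _)

theorem span_S3_mul_ι_eq_span_w₂ :
    Submodule.span F {x | x ∈ S3 u ∧ ∃ u' ∈ ⋀[F]^2 U, ∃ v : U, x = u' * ι F v} =
      Submodule.span F {w₂ u} := by
  refine le_antisymm (Submodule.span_le.2 ?_) (Submodule.span_le.2 ?_)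
  · rintro x ⟨hxS, u', -, v, rfl⟩
    have hx := eq_smul_w₁_add_smul_w₂_of_mem_S3 u hxS
    have hxv : (coord3 u 0 1 2 (u' * ι F v) • w₁ u + coord3 u 0 2 4 (u' * ι F v) • w₂ u)
        * ι F v = 0 := by
      rw [← hx, mul_assoc, ι_sq_zero, mul_zero]
    by_cases hα : coord3 u 0 1 2 (u' * ι F v) = 0
    · rw [hx, hα, zero_smul, zero_add]
      exact Submodule.smul_mem _ _ (Submodule.subset_span rfl)
    · rw [eq_zero_of_smul_w₁_add_smul_w₂_mul_ι_eq_zero u hα hxv, map_zero, mul_zero]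
      exact Submodule.zero_mem _
  · rintro y rfl
    exact Submodule.subset_span ⟨w₂_mem_S3 u, _, ι_mul_ι_mem (u 0) (u 2), u 4, rfl⟩

end SixDim

theorem stmt_11_general (p : ℕ) [Fact p.Prime]
    (U : Type*) [AddCommGroup U] [Module (ZMod p) U] (u : Module.Basis (Fin 6) (ZMod p) U) :
    let F := ZMod p
    let φ : Fin 3 → Fin 6 → (ExteriorAlgebra F U →ₗ[F] F) := fun i j =>
      ![pairDual F U 3 ![u.coord 0, u.coord 1, u.coord j]
          - pairDual F U 3 ![u.coord 3, u.coord 4, u.coord j],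
        pairDual F U 3 ![u.coord 1, u.coord 2, u.coord j]
          - pairDual F U 3 ![u.coord 4, u.coord 5, u.coord j]
          + pairDual F U 3 ![u.coord 0, u.coord 3, u.coord j],
        pairDual F U 3 ![u.coord 2, u.coord 5, u.coord j]
          - pairDual F U 3 ![u.coord 1, u.coord 3, u.coord j]] i
    let S₃ : Submodule F (ExteriorAlgebra F U) :=
      ⋀[F]^3 U ⊓ ⨅ i : Fin 3, ⨅ j : Fin 6, LinearMap.ker (φ i j)
    let e : Fin 6 → ExteriorAlgebra F U := fun i => ι F (u i)
    let w₁ := e 0 * e 1 * e 2 + e 0 * e 4 * e 5 + e 2 * e 3 * e 4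
    let w₂ := e 0 * e 2 * e 4
    S₃ = Submodule.span F {w₁, w₂} ∧
      Submodule.span F
          {x | x ∈ S₃ ∧ ∃ u' ∈ ⋀[F]^2 U, ∃ v : U, x = u' * ι F v} =
        Submodule.span F {w₂} :=
  ⟨S3_eq_span u, span_S3_mul_ι_eq_span_w₂ u⟩

/-- Let `p` be odd, `U` a 6-dimensional `F_p`-vector space, `f₁ = u₁*∧u₂* − u₄*∧u₅*`,
`f₂ = u₂*∧u₃* − u₅*∧u₆* + u₁*∧u₄*`, `f₃ = u₃*∧u₆* − u₂*∧u₄*`, and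
`K³ = span{fᵢ∧uⱼ*} ⊆ Λ³U*`.  Then `S³ = (K³)^⊥` equals `span{w₁, w₂}` where
`w₁ = u₁∧u₂∧u₃ + u₁∧u₅∧u₆ + u₃∧u₄∧u₅` and `w₂ = u₁∧u₃∧u₅`, and the span of the
elements of `S³` of the form `u'∧u` equals `span{w₂}`. -/
theorem stmt_11 (p : ℕ) [Fact p.Prime] (hp2 : p ≠ 2)
    (U : Type*) [AddCommGroup U] [Module (ZMod p) U] (u : Module.Basis (Fin 6) (ZMod p) U) :
    let F := ZMod p
    let φ : Fin 3 → Fin 6 → (ExteriorAlgebra F U →ₗ[F] F) := fun i j =>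
      ![pairDual F U 3 ![u.coord 0, u.coord 1, u.coord j]
          - pairDual F U 3 ![u.coord 3, u.coord 4, u.coord j],
        pairDual F U 3 ![u.coord 1, u.coord 2, u.coord j]
          - pairDual F U 3 ![u.coord 4, u.coord 5, u.coord j]
          + pairDual F U 3 ![u.coord 0, u.coord 3, u.coord j],
        pairDual F U 3 ![u.coord 2, u.coord 5, u.coord j]
          - pairDual F U 3 ![u.coord 1, u.coord 3, u.coord j]] i
    let S₃ : Submodule F (ExteriorAlgebra F U) :=
      ⋀[F]^3 U ⊓ ⨅ i : Fin 3, ⨅ j : Fin 6, LinearMap.ker (φ i j)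
    let e : Fin 6 → ExteriorAlgebra F U := fun i => ι F (u i)
    let w₁ := e 0 * e 1 * e 2 + e 0 * e 4 * e 5 + e 2 * e 3 * e 4
    let w₂ := e 0 * e 2 * e 4
    S₃ = Submodule.span F {w₁, w₂} ∧
      Submodule.span F
          {x | x ∈ S₃ ∧ ∃ u' ∈ ⋀[F]^2 U, ∃ v : U, x = u' * ι F v} =
        Submodule.span F {w₂} :=
  stmt_11_general p U u
end

section
/- Let U be a 4-dimensional F_p-vector space (p an odd prime) with basis u₁,...,u₄, and let S² ⊆ Λ²U be the annihilator of span{f₁, f₂, f₃} where f₁ = u₁*∧u₂*, f₂ = u₁*∧u₃* + u₂*∧u₄*, f₃ = u₁*∧u₄*, under the standard pairing Λ²U × Λ²U* → F_p. Then S² = span{u₂∧u₃, u₃∧u₄, u₁∧u₃ − u₂∧u₄}, the span of decomposable elements of S² equals span{u₂∧u₃, u₃∧u₄}, and hence S²_dec has codimension 1 in S². -/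
/-!
Write `p_ij = ⟨·, u_i* ∧ u_j*⟩` (indices `0, …, 3`) for the Plücker coordinates on `⋀²U`.
Every `x ∈ ⋀²U` is recovered as `x = ∑_{i<j} p_ij(x) • u_i ∧ u_j`, since both sides are linear
in `x` and agree on the spanning products `a ∧ b`. The three conditions defining `S²` say
`p₀₁ = p₀₃ = 0` and `p₁₃ = -p₀₂`, leaving the free coordinates `p₁₂, p₂₃, p₀₂`; these also
separate the three generators, which are therefore independent. On a decomposable `a ∧ b` the
Plücker relation `p₀₁p₂₃ - p₀₂p₁₃ + p₀₃p₁₂ = 0` becomes `p₀₂² = 0`, so `a ∧ b` lies in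
`span{u₁∧u₂, u₂∧u₃}`.
-/

open ExteriorAlgebra

open Submodule

section
variable {F U : Type*} [Field F] [AddCommGroup U] [Module F U]

theorem ExteriorAlgebra.ιMulti_fin_two (v : Fin 2 → U) : ιMulti F 2 v = ι F (v 0) * ι F (v 1) := by
  simp [ιMulti_apply, Matrix.vecTail]

theorem ExteriorAlgebra.ι_mul_ι_mem_exteriorPower_two_s15 (a b : U) : ι F a * ι F b ∈ ⋀[F]^2 U := by
  simpa [ιMulti_fin_two] using ιMulti_range F 2 (M := U) ⟨![a, b], rfl⟩

theorem ExteriorAlgebra.ι_mul_ι_swap_s15 (a b : U) : ι F b * ι F a = -(ι F a * ι F b) :=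
  eq_neg_of_add_eq_zero_left (ι_add_mul_swap b a)

theorem pairDual_two_ι_mul_ι (f g : Module.Dual F U) (a b : U) :
    pairDual F U 2 ![f, g] (ι F a * ι F b) = f a * g b - f b * g a := by
  rw [show ι F a * ι F b = ιMulti F 2 ![a, b] from (ιMulti_fin_two ![a, b]).symm, pairDual,
    liftAlternating_apply_ιMulti]
  simp only [Pi.single_eq_same, AlternatingMap.compLinearMap_apply]
  change Matrix.det (Matrix.of fun i => LinearMap.pi ![f, g] (![a, b] i)) = _
  simp [Matrix.det_fin_two, mul_comm (g a)]

variable {κ : Type*} (u : Module.Basis κ F U)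

noncomputable def pluckerCoord (i j : κ) : ExteriorAlgebra F U →ₗ[F] F :=
  pairDual F U 2 ![u.coord i, u.coord j]

theorem pluckerCoord_ι_mul_ι (i j : κ) (a b : U) :
    pluckerCoord u i j (ι F a * ι F b) = u.repr a i * u.repr b j - u.repr b i * u.repr a j := by
  simp [pluckerCoord, pairDual_two_ι_mul_ι]

theorem pluckerCoord_relation (i j k l : κ) (a b : U) :
    let w := ι F a * ι F b
    pluckerCoord u i j w * pluckerCoord u k l w - pluckerCoord u i k w * pluckerCoord u j l w +
      pluckerCoord u i l w * pluckerCoord u j k w = 0 := by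
  simp only [pluckerCoord_ι_mul_ι]
  ring

theorem pluckerCoord_ι_mul_ι_basis [DecidableEq κ] (i j k l : κ) :
    pluckerCoord u i j (ι F (u k) * ι F (u l)) =
      (if k = i ∧ l = j then 1 else 0) - (if k = j ∧ l = i then 1 else 0) := by
  simp only [pluckerCoord_ι_mul_ι, Module.Basis.repr_self, Finsupp.single_apply, ite_and]
  split_ifs <;> simp

end

section
variable {F U : Type*} [Field F] [AddCommGroup U] [Module F U] (u : Module.Basis (Fin 4) F U)

theorem ι_mul_ι_eq_sum_pluckerCoord (a b : U) :
    let w := ι F a * ι F b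
    w = pluckerCoord u 0 1 w • (ι F (u 0) * ι F (u 1)) +
      pluckerCoord u 0 2 w • (ι F (u 0) * ι F (u 2)) +
      pluckerCoord u 0 3 w • (ι F (u 0) * ι F (u 3)) +
      pluckerCoord u 1 2 w • (ι F (u 1) * ι F (u 2)) +
      pluckerCoord u 1 3 w • (ι F (u 1) * ι F (u 3)) +
      pluckerCoord u 2 3 w • (ι F (u 2) * ι F (u 3)) := by
  simp only [pluckerCoord_ι_mul_ι]
  conv_lhs => rw [← u.sum_repr a, ← u.sum_repr b]
  rw [map_sum, map_sum, Finset.sum_mul_sum]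
  simp only [map_smul, smul_mul_smul_comm, Fin.sum_univ_four, ι_sq_zero]
  rw [ι_mul_ι_swap_s15 (u 0) (u 1), ι_mul_ι_swap_s15 (u 0) (u 2), ι_mul_ι_swap_s15 (u 0) (u 3),
    ι_mul_ι_swap_s15 (u 1) (u 2), ι_mul_ι_swap_s15 (u 1) (u 3), ι_mul_ι_swap_s15 (u 2) (u 3)]
  module

theorem eq_sum_pluckerCoord {x : ExteriorAlgebra F U} (hx : x ∈ ⋀[F]^2 U) :
    x = pluckerCoord u 0 1 x • (ι F (u 0) * ι F (u 1)) +
      pluckerCoord u 0 2 x • (ι F (u 0) * ι F (u 2)) +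
      pluckerCoord u 0 3 x • (ι F (u 0) * ι F (u 3)) +
      pluckerCoord u 1 2 x • (ι F (u 1) * ι F (u 2)) +
      pluckerCoord u 1 3 x • (ι F (u 1) * ι F (u 3)) +
      pluckerCoord u 2 3 x • (ι F (u 2) * ι F (u 3)) := by
  rw [← ιMulti_span_fixedDegree] at hx
  induction hx using Submodule.span_induction with
  | mem _ h =>
    obtain ⟨v, rfl⟩ := h
    rw [ιMulti_fin_two]
    exact ι_mul_ι_eq_sum_pluckerCoord u _ _
  | zero => simp
  | add x y _ _ hx hy =>
    simp only [map_add, add_smul]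
    linear_combination (norm := module) hx + hy
  | smul c x _ hx =>
    simp only [map_smul, smul_eq_mul, mul_smul]
    linear_combination (norm := module) c • hx

noncomputable def annihilatorS2 : Submodule F (ExteriorAlgebra F U) :=
  ⋀[F]^2 U ⊓ LinearMap.ker (pluckerCoord u 0 1) ⊓
    LinearMap.ker (pluckerCoord u 0 2 + pluckerCoord u 1 3) ⊓ LinearMap.ker (pluckerCoord u 0 3)

variable {u} in
theorem mem_annihilatorS2_iff {x : ExteriorAlgebra F U} :
    x ∈ annihilatorS2 u ↔ x ∈ ⋀[F]^2 U ∧ pluckerCoord u 0 1 x = 0 ∧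
      pluckerCoord u 0 2 x + pluckerCoord u 1 3 x = 0 ∧ pluckerCoord u 0 3 x = 0 := by
  simp [annihilatorS2, and_assoc]

theorem annihilatorS2_eq_span :
    annihilatorS2 u = span F {ι F (u 1) * ι F (u 2), ι F (u 2) * ι F (u 3),
      ι F (u 0) * ι F (u 2) - ι F (u 1) * ι F (u 3)} := by
  apply le_antisymm
  · intro x hx
    obtain ⟨hx, h01, h0213, h03⟩ := mem_annihilatorS2_iff.1 hx
    have h13 : pluckerCoord u 1 3 x = -pluckerCoord u 0 2 x := by linear_combination h0213
    refine mem_span_triple.2 ⟨pluckerCoord u 1 2 x, pluckerCoord u 2 3 x, pluckerCoord u 0 2 x, ?_⟩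
    conv_rhs => rw [eq_sum_pluckerCoord u hx, h01, h03, h13]
    module
  · refine span_le.2 ?_
    simp [Set.insert_subset_iff, mem_annihilatorS2_iff, pluckerCoord_ι_mul_ι_basis, sub_mem,
      ι_mul_ι_mem_exteriorPower_two_s15]

theorem ι_mul_ι_mem_span_of_mem_annihilatorS2 {a b : U} (h : ι F a * ι F b ∈ annihilatorS2 u) :
    ι F a * ι F b ∈ span F {ι F (u 1) * ι F (u 2), ι F (u 2) * ι F (u 3)} := by
  have hrel := pluckerCoord_relation u 0 1 2 3 a b
  set w := ι F a * ι F b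
  obtain ⟨hw, h01, h0213, h03⟩ := mem_annihilatorS2_iff.1 h
  have h02 : pluckerCoord u 0 2 w = 0 := by
    refine mul_self_eq_zero.1 ?_
    linear_combination pluckerCoord u 0 2 w * h0213 + hrel - pluckerCoord u 2 3 w * h01 -
      pluckerCoord u 1 2 w * h03
  have h13 : pluckerCoord u 1 3 w = 0 := by linear_combination h0213 - h02
  refine mem_span_pair.2 ⟨pluckerCoord u 1 2 w, pluckerCoord u 2 3 w, ?_⟩
  conv_rhs => rw [eq_sum_pluckerCoord u hw, h01, h02, h03, h13]
  module

theorem linearIndependent_annihilatorS2_generators :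
    LinearIndependent F ![ι F (u 1) * ι F (u 2), ι F (u 2) * ι F (u 3),
      ι F (u 0) * ι F (u 2) - ι F (u 1) * ι F (u 3)] := by
  rw [Fintype.linearIndependent_iff]
  intro c hc
  simp only [Fin.sum_univ_three, Matrix.cons_val_zero, Matrix.cons_val_one, Matrix.cons_val_two] at hc
  intro i
  fin_cases i
  · simpa [pluckerCoord_ι_mul_ι_basis] using congrArg (pluckerCoord u 1 2) hc
  · simpa [pluckerCoord_ι_mul_ι_basis] using congrArg (pluckerCoord u 2 3) hc
  · simpa [pluckerCoord_ι_mul_ι_basis] using congrArg (pluckerCoord u 0 2) hc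

theorem span_decomposable_annihilatorS2 :
    span F {x | x ∈ annihilatorS2 u ∧ ∃ a b : U, x = ι F a * ι F b} =
      span F {ι F (u 1) * ι F (u 2), ι F (u 2) * ι F (u 3)} := by
  apply le_antisymm
  · refine span_le.2 ?_
    rintro _ ⟨hx, a, b, rfl⟩
    exact ι_mul_ι_mem_span_of_mem_annihilatorS2 u hx
  · refine span_mono ?_
    simp only [annihilatorS2_eq_span, Set.insert_subset_iff, Set.singleton_subset_iff]
    exact ⟨⟨subset_span (by simp), _, _, rfl⟩, subset_span (by simp), _, _, rfl⟩

theorem finrank_span_annihilatorS2_generators :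
    Module.finrank F (span F {ι F (u 1) * ι F (u 2), ι F (u 2) * ι F (u 3),
      ι F (u 0) * ι F (u 2) - ι F (u 1) * ι F (u 3)}) =
    Module.finrank F (span F {ι F (u 1) * ι F (u 2), ι F (u 2) * ι F (u 3)}) + 1 := by
  have li3 := linearIndependent_annihilatorS2_generators u
  have li2 : LinearIndependent F ![ι F (u 1) * ι F (u 2), ι F (u 2) * ι F (u 3)] := by
    convert li3.comp Fin.castSucc (Fin.castSucc_injective 2) using 1
    ext i; fin_cases i <;> rfl
  have h3 := finrank_span_eq_card li3
  have h2 := finrank_span_eq_card li2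
  rw [Matrix.range_cons, Matrix.range_cons_cons_empty, Set.singleton_union] at h3
  rw [Matrix.range_cons_cons_empty] at h2
  rw [h3, h2, Fintype.card_fin, Fintype.card_fin]

end

theorem stmt_15_general (p : ℕ) [Fact p.Prime]
    (U : Type*) [AddCommGroup U] [Module (ZMod p) U] (u : Module.Basis (Fin 4) (ZMod p) U) :
    let F := ZMod p
    let φ₁ := pairDual F U 2 ![u.coord 0, u.coord 1]
    let φ₂ := pairDual F U 2 ![u.coord 0, u.coord 2] + pairDual F U 2 ![u.coord 1, u.coord 3]
    let φ₃ := pairDual F U 2 ![u.coord 0, u.coord 3]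
    let S₂ : Submodule F (ExteriorAlgebra F U) :=
      ⋀[F]^2 U ⊓ LinearMap.ker φ₁ ⊓ LinearMap.ker φ₂ ⊓ LinearMap.ker φ₃
    let e : Fin 4 → ExteriorAlgebra F U := fun i => ι F (u i)
    let S₂dec : Submodule F (ExteriorAlgebra F U) :=
      Submodule.span F {x | x ∈ S₂ ∧ ∃ a b : U, x = ι F a * ι F b}
    S₂ = Submodule.span F {e 1 * e 2, e 2 * e 3, e 0 * e 2 - e 1 * e 3} ∧
      S₂dec = Submodule.span F {e 1 * e 2, e 2 * e 3} ∧
      Module.finrank F S₂ = Module.finrank F S₂dec + 1 := by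
  intro F φ₁ φ₂ φ₃ S₂ e S₂dec
  have hS₂ : S₂ = _ := annihilatorS2_eq_span u
  have hS₂dec : S₂dec = _ := span_decomposable_annihilatorS2 u
  exact ⟨hS₂, hS₂dec, hS₂ ▸ hS₂dec ▸ finrank_span_annihilatorS2_generators u⟩

/-- Let `U` be a 4-dimensional `F_p`-vector space (`p` odd) and `S² ⊆ Λ²U` the annihilator
of `span{f₁, f₂, f₃}` where `f₁ = u₁*∧u₂*`, `f₂ = u₁*∧u₃* + u₂*∧u₄*`, `f₃ = u₁*∧u₄*`.
Then `S² = span{u₂∧u₃, u₃∧u₄, u₁∧u₃ − u₂∧u₄}`, the span of the decomposable elements of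
`S²` equals `span{u₂∧u₃, u₃∧u₄}`, and `S²_dec` has codimension 1 in `S²`. -/
theorem stmt_15 (p : ℕ) [Fact p.Prime] (hp2 : p ≠ 2)
    (U : Type*) [AddCommGroup U] [Module (ZMod p) U] (u : Module.Basis (Fin 4) (ZMod p) U) :
    let F := ZMod p
    let φ₁ := pairDual F U 2 ![u.coord 0, u.coord 1]
    let φ₂ := pairDual F U 2 ![u.coord 0, u.coord 2] + pairDual F U 2 ![u.coord 1, u.coord 3]
    let φ₃ := pairDual F U 2 ![u.coord 0, u.coord 3]
    let S₂ : Submodule F (ExteriorAlgebra F U) :=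
      ⋀[F]^2 U ⊓ LinearMap.ker φ₁ ⊓ LinearMap.ker φ₂ ⊓ LinearMap.ker φ₃
    let e : Fin 4 → ExteriorAlgebra F U := fun i => ι F (u i)
    let S₂dec : Submodule F (ExteriorAlgebra F U) :=
      Submodule.span F {x | x ∈ S₂ ∧ ∃ a b : U, x = ι F a * ι F b}
    S₂ = Submodule.span F {e 1 * e 2, e 2 * e 3, e 0 * e 2 - e 1 * e 3} ∧
      S₂dec = Submodule.span F {e 1 * e 2, e 2 * e 3} ∧
      Module.finrank F S₂ = Module.finrank F S₂dec + 1 :=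
  stmt_15_general p U u
end
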